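/- arXiv:1010.3566 — 2 statements merged into one kernel-verified Lean document; each statement's English description precedes it below -/
import Mathlib

section
/- Every nonnegative n×m real matrix P with rank(P) ≤ 2 satisfies rk₊(P) = rank(P). -/
/-!
Normalise every nonzero column of `P` to entry sum `1`. The normalised columns lie in the column
space and on the hyperplane `∑ xᵢ = 1`; when `rank P ≤ 2` they therefore lie on a line, hence on
the segment between the two extreme ones. So every column is a nonnegative combination of at most
two nonnegative vectors, and of one when the two extremes coincide, which happens only in rank
one. Conversely, a sum of `k` dyads has rank at most `k`.
-/

open Matrix BigOperators Filter Topology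

/-- The nonnegative rank: least `k` such that `P` is a sum of `k` nonnegative dyads. -/
noncomputable def nnRank {n m : ℕ} (P : Matrix (Fin n) (Fin m) ℝ) : ℕ :=
  sInf {k : ℕ | ∃ (c : Fin k → Fin n → ℝ) (r : Fin k → Fin m → ℝ),
    (∀ h i, 0 ≤ c h i) ∧ (∀ h j, 0 ≤ r h j) ∧
    P = ∑ h, Matrix.vecMulVec (c h) (r h)}

/-- Frobenius distance between two matrices. -/
noncomputable def frobDist {n m : ℕ} (P N : Matrix (Fin n) (Fin m) ℝ) : ℝ :=
  Real.sqrt (∑ i, ∑ j, (P i j - N i j) ^ 2)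

open Module Submodule Set

section NormalizedFamily

variable {K E ι : Type*} [Field K] [AddCommGroup E] [Module K E] (ℓ : E →ₗ[K] K)

theorem linearIndependent_pair_of_map_eq_one {x y : E} (hx : ℓ x = 1) (hy : ℓ y = 1)
    (hxy : x ≠ y) : LinearIndependent K ![x, y] := by
  rw [LinearIndependent.pair_iff]
  intro s t hst
  have hts : t = -s := by
    simpa [hx, hy, eq_neg_iff_add_eq_zero, add_comm] using congrArg ℓ hst
  subst hts
  have hs : s • (x - y) = 0 := by rw [smul_sub, sub_eq_add_neg, ← neg_smul]; exact hst
  have : s = 0 := (smul_eq_zero.mp hs).resolve_right (sub_ne_zero.mpr hxy)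
  simp [this]

theorem finrank_span_pair_of_map_eq_one {x y : E} (hx : ℓ x = 1) (hy : ℓ y = 1) (hxy : x ≠ y) :
    finrank K (span K {x, y}) = 2 := by
  rw [← range_cons_cons_empty _ _ ![],
    finrank_span_eq_card (linearIndependent_pair_of_map_eq_one ℓ hx hy hxy), Fintype.card_fin]

variable [Finite ι] {u : ι → E}

theorem two_le_finrank_span_range_of_map_eq_one (hu : ∀ j, ℓ (u j) = 1) {a b : ι}
    (hab : u a ≠ u b) : 2 ≤ finrank K (span K (range u)) := by
  have := FiniteDimensional.span_of_finite K (finite_range u)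
  rw [← finrank_span_pair_of_map_eq_one ℓ (hu a) (hu b) hab]
  exact Submodule.finrank_mono (span_mono (pair_subset (mem_range_self a) (mem_range_self b)))

theorem one_le_finrank_span_range_of_map_eq_one (hu : ∀ j, ℓ (u j) = 1) (a : ι) :
    1 ≤ finrank K (span K (range u)) := by
  have := FiniteDimensional.span_of_finite K (finite_range u)
  have hua : u a ≠ 0 := fun h => by simpa [h] using hu a
  calc 1 = finrank K (K ∙ u a) := (finrank_span_singleton hua).symm
    _ ≤ finrank K (span K (range u)) :=
      Submodule.finrank_mono ((span_singleton_le_iff_mem _ _).mpr (subset_span (mem_range_self a)))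

theorem exists_forall_eq_lineMap_of_finrank_span_le_two (hu : ∀ j, ℓ (u j) = 1)
    (hrank : finrank K (span K (range u)) ≤ 2) :
    ∃ x y : E, ∀ j, ∃ t : K, u j = AffineMap.lineMap x y t := by
  rcases isEmpty_or_nonempty ι with _ | ⟨⟨a⟩⟩
  · exact ⟨0, 0, isEmptyElim⟩
  by_cases h : ∃ b, u a ≠ u b
  · obtain ⟨b, hab⟩ := h
    have := FiniteDimensional.span_of_finite K (finite_range u)
    have hspan : span K {u a, u b} = span K (range u) := by
      refine eq_of_le_of_finrank_le
        (span_mono (pair_subset (mem_range_self a) (mem_range_self b))) ?_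
      rwa [finrank_span_pair_of_map_eq_one ℓ (hu a) (hu b) hab]
    refine ⟨u a, u b, fun j => ?_⟩
    obtain ⟨p, q, hpq⟩ := mem_span_pair.mp (hspan ▸ subset_span (mem_range_self j))
    have hp : p = 1 - q := by
      simpa [hu, eq_sub_iff_add_eq] using congrArg ℓ hpq
    exact ⟨q, by rw [AffineMap.lineMap_apply_module, ← hpq, hp]⟩
  · push Not at h
    exact ⟨u a, u a, fun j => ⟨0, by simp [h j]⟩⟩

end NormalizedFamily

theorem exists_forall_mem_segment_of_forall_eq_lineMap {𝕜 E ι : Type*} [Field 𝕜] [LinearOrder 𝕜]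
    [IsStrictOrderedRing 𝕜] [AddCommGroup E] [Module 𝕜 E] [Finite ι] [Nonempty ι] {u : ι → E}
    {x y : E} (hu : ∀ j, ∃ t : 𝕜, u j = AffineMap.lineMap x y t) :
    ∃ a b, ∀ j, u j ∈ segment 𝕜 (u a) (u b) := by
  choose t ht using hu
  obtain ⟨a, ha⟩ := Finite.exists_min t
  obtain ⟨b, hb⟩ := Finite.exists_max t
  refine ⟨a, b, fun j => ?_⟩
  simp only [ht]
  rw [← image_segment, segment_eq_Icc (ha b)]
  exact mem_image_of_mem _ ⟨ha j, hb j⟩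

section NonnegRank

variable {n m : ℕ} {P : Matrix (Fin n) (Fin m) ℝ}

theorem sum_vecMulVec_eq_mul {R ι m n : Type*} [Fintype ι] [NonUnitalNonAssocSemiring R]
    (c : ι → m → R) (r : ι → n → R) :
    ∑ h, vecMulVec (c h) (r h) = (of fun i h => c h i) * of r := by
  ext i j
  simp [Matrix.sum_apply, vecMulVec_apply, Matrix.mul_apply]

theorem rank_sum_vecMulVec_le {R m n : Type*} [CommRing R] [StrongRankCondition R] [Fintype n]
    {k : ℕ} (c : Fin k → m → R) (r : Fin k → n → R) :
    (∑ h, vecMulVec (c h) (r h)).rank ≤ k := by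
  rw [sum_vecMulVec_eq_mul]
  exact (rank_mul_le_right _ _).trans ((rank_le_card_height _).trans_eq (Fintype.card_fin k))

theorem rank_le_nnRank (hP : ∀ i j, 0 ≤ P i j) : P.rank ≤ nnRank P := by
  refine le_csInf ⟨m, P.col, fun j => Pi.single j 1, fun h i => hP i h,
    fun h j => by simp only [Pi.single_apply]; positivity, ?_⟩
    fun k ⟨c, r, _, _, hPk⟩ => hPk ▸ rank_sum_vecMulVec_le c r
  ext i j
  simp [Matrix.sum_apply, vecMulVec_apply, Pi.single_apply]

theorem sum_col_pos (hP : ∀ i j, 0 ≤ P i j) {j : Fin m} (hj : P.col j ≠ 0) :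
    0 < ∑ i, P i j :=
  Fintype.sum_pos ((show 0 ≤ P.col j from fun i => hP i j).lt_of_ne' hj)

variable (P) in
noncomputable def normalizedCol (j : Fin m) : Fin n → ℝ :=
  (∑ i, P i j)⁻¹ • P.col j

theorem normalizedCol_nonneg (hP : ∀ i j, 0 ≤ P i j) (j : Fin m) (i : Fin n) :
    0 ≤ normalizedCol P j i :=
  mul_nonneg (inv_nonneg.mpr (Finset.sum_nonneg fun i _ => hP i j)) (hP i j)

theorem sum_normalizedCol (hP : ∀ i j, 0 ≤ P i j) {j : Fin m} (hj : P.col j ≠ 0) :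
    ∑ i, normalizedCol P j i = 1 := by
  simp [normalizedCol, ← Finset.mul_sum, (sum_col_pos hP hj).ne']

variable (P) in
theorem finrank_span_normalizedCol_le_rank :
    finrank ℝ (span ℝ (range (normalizedCol P))) ≤ P.rank := by
  rw [rank_eq_finrank_span_cols]
  refine Submodule.finrank_mono (span_le.mpr ?_)
  rintro _ ⟨j, rfl⟩
  exact smul_mem _ _ (subset_span (mem_range_self j))

theorem nnRank_le_of_forall_normalizedCol_eq_sum (hP : ∀ i j, 0 ≤ P i j) {k : ℕ}
    (c : Fin k → Fin n → ℝ) (hc : ∀ h i, 0 ≤ c h i)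
    (hcol : ∀ j, P.col j ≠ 0 → ∃ w : Fin k → ℝ, (∀ h, 0 ≤ w h) ∧
      normalizedCol P j = ∑ h, w h • c h) :
    nnRank P ≤ k := by
  have hw : ∀ j, ∃ w : Fin k → ℝ, (∀ h, 0 ≤ w h) ∧ P.col j = ∑ h, w h • c h := by
    intro j
    by_cases hj : P.col j = 0
    · exact ⟨0, fun _ => le_rfl, by simp [hj]⟩
    obtain ⟨w, hw0, hwj⟩ := hcol j hj
    have hs := sum_col_pos hP hj
    refine ⟨(∑ i, P i j) • w, fun h => mul_nonneg hs.le (hw0 h), ?_⟩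
    rw [← smul_inv_smul₀ hs.ne' (P.col j), ← normalizedCol, hwj, Finset.smul_sum]
    simp only [Pi.smul_apply, smul_smul, smul_eq_mul]
  choose w hw0 hwcol using hw
  refine Nat.sInf_le ⟨c, fun h j => w j h, hc, fun h j => hw0 j h, ?_⟩
  ext i j
  have := congrFun (hwcol j) i
  simp only [col_apply, Finset.sum_apply, Pi.smul_apply, smul_eq_mul] at this
  simp [Matrix.sum_apply, vecMulVec_apply, this, mul_comm]

theorem nnRank_le_rank_of_rank_le_two (hP : ∀ i j, 0 ≤ P i j) (hrk : P.rank ≤ 2) :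
    nnRank P ≤ P.rank := by
  let u : {j // P.col j ≠ 0} → Fin n → ℝ := normalizedCol P ∘ Subtype.val
  let ℓ : (Fin n → ℝ) →ₗ[ℝ] ℝ := ∑ i, LinearMap.proj i
  have hℓu : ∀ j, ℓ (u j) = 1 := fun j => by simp [u, ℓ, sum_normalizedCol hP j.2]
  have hrank_u : finrank ℝ (span ℝ (range u)) ≤ P.rank :=
    (Submodule.finrank_mono (span_mono (range_comp_subset_range _ _))).trans
      (finrank_span_normalizedCol_le_rank P)
  rcases isEmpty_or_nonempty {j // P.col j ≠ 0} with hzero | hne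
  · exact (nnRank_le_of_forall_normalizedCol_eq_sum hP Fin.elim0 (fun h => h.elim0)
      fun j hj => (hzero.false ⟨j, hj⟩).elim).trans (Nat.zero_le _)
  obtain ⟨x, y, hline⟩ := exists_forall_eq_lineMap_of_finrank_span_le_two ℓ hℓu (hrank_u.trans hrk)
  obtain ⟨a, b, hseg⟩ := exists_forall_mem_segment_of_forall_eq_lineMap hline
  rcases eq_or_ne (u a) (u b) with hab | hab
  · calc nnRank P ≤ 1 := by
          refine nnRank_le_of_forall_normalizedCol_eq_sum hP ![u a]
            (by simpa [u] using normalizedCol_nonneg hP a) fun j hj => ⟨![1], by simp, ?_⟩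
          have := hseg ⟨j, hj⟩
          rw [← hab, segment_same] at this
          simpa [u] using this
      _ ≤ P.rank := (one_le_finrank_span_range_of_map_eq_one ℓ hℓu a).trans hrank_u
  · calc nnRank P ≤ 2 := by
          refine nnRank_le_of_forall_normalizedCol_eq_sum hP ![u a, u b]
            (by simpa [u, Fin.forall_fin_two] using
              ⟨normalizedCol_nonneg hP a, normalizedCol_nonneg hP b⟩) fun j hj => ?_
          obtain ⟨α, β, hα, hβ, -, hαβ⟩ := hseg ⟨j, hj⟩
          exact ⟨![α, β], by simpa [Fin.forall_fin_two] using ⟨hα, hβ⟩, by simpa [u] using hαβ.symm⟩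
      _ ≤ P.rank := (two_le_finrank_span_range_of_map_eq_one ℓ hℓu hab).trans hrank_u

end NonnegRank

theorem nnRank_eq_rank_of_rank_le_two {n m : ℕ} (P : Matrix (Fin n) (Fin m) ℝ)
    (hP : ∀ i j, 0 ≤ P i j) (hrk : P.rank ≤ 2) :
    nnRank P = P.rank :=
  (nnRank_le_rank_of_rank_le_two hP hrk).antisymm (rank_le_nnRank hP)
end

section
/- For all n, m and every k with 2 < k < min{n,m}, the set of n×m probability matrices of nonnegative rank at most k (the mixture of k independence models) is not dense in the set of n×m matrices of ordinary rank at most k intersected with the probability simplex: there exists a probability matrix P with rank(P) = k and rk₊(P) > k which is not the limit of any sequence of matrices Pₙ with rank(Pₙ) = rk₊(Pₙ) = k. -/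
/-!
The witness is the normalization of the `0/1` matrix supported on the diagonal `{0, …, k}` and
the cycle `(1,0), (2,1), (3,2), (0,3)`. Its rows `1, …, k` span all rows (row `0` is
row `1` − row `2` + row `3`) and the minor on rows and columns `1, …, k` is unitriangular, so its
rank is `k`. The diagonal `{0, …, k}` is a fooling set: no dyad of a nonnegative factorization can
be nonzero at two of its cells, so every factorization needs `k + 1` dyads.

On the other hand, matrices with a nonnegative factorization into `k` dyads form a closed set:
rescaling each dyad, the factors of a matrix with bounded column sums can be taken from a compact
box, whose image under `(c, r) ↦ ∑ c_h r_hᵀ` is compact. A limit of matrices of nonnegative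
rank `k` therefore has nonnegative rank at most `k`.
-/

open Matrix BigOperators Filter Topology

namespace Matrix

variable {α β ι : Type*}

def HasNonnegFactorization (k : ℕ) (P : Matrix α β ℝ) : Prop :=
  ∃ (c : Fin k → α → ℝ) (r : Fin k → β → ℝ),
    (∀ h i, 0 ≤ c h i) ∧ (∀ h j, 0 ≤ r h j) ∧ P = ∑ h, vecMulVec (c h) (r h)

theorem hasNonnegFactorization_of_nonneg {n : ℕ} {P : Matrix (Fin n) β ℝ}
    (hP : ∀ i j, 0 ≤ P i j) : HasNonnegFactorization n P := by
  refine ⟨fun h => Pi.single h 1, fun h => P h, fun h i => ?_, fun h => hP h, ?_⟩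
  · by_cases hi : i = h <;> simp [hi]
  · ext i j
    simp [sum_apply, vecMulVec_apply, Pi.single_apply]

theorem HasNonnegFactorization.submatrix {α' β' : Type*} {k : ℕ} {P : Matrix α β ℝ}
    (hP : HasNonnegFactorization k P) (e : α' → α) (f : β' → β) :
    HasNonnegFactorization k (P.submatrix e f) := by
  obtain ⟨c, r, hc, hr, rfl⟩ := hP
  refine ⟨fun h => c h ∘ e, fun h => r h ∘ f, fun h i => hc h (e i), fun h j => hr h (f j), ?_⟩
  ext i j
  simp [sum_apply, vecMulVec_apply]

theorem HasNonnegFactorization.exists_bounded [Fintype α] {k : ℕ} {P : Matrix α β ℝ}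
    (hP : HasNonnegFactorization k P) :
    ∃ (c : Fin k → α → ℝ) (r : Fin k → β → ℝ),
      (∀ h i, c h i ∈ Set.Icc 0 1) ∧ (∀ h j, r h j ∈ Set.Icc 0 (∑ i, P i j)) ∧
      P = ∑ h, vecMulVec (c h) (r h) := by
  obtain ⟨c, r, hc, hr, rfl⟩ := hP
  set s : Fin k → ℝ := fun h => ∑ i, c h i
  have hs : ∀ h, 0 ≤ s h := fun h => Finset.sum_nonneg fun i _ => hc h i
  have hcs : ∀ h i, c h i ≤ s h := fun h i =>
    Finset.single_le_sum (fun i _ => hc h i) (Finset.mem_univ i)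
  refine ⟨fun h i => c h i / s h, fun h j => s h * r h j, fun h i => ?_, fun h j => ?_, ?_⟩
  · exact ⟨div_nonneg (hc h i) (hs h), div_le_one_of_le₀ (hcs h i) (hs h)⟩
  · refine ⟨mul_nonneg (hs h) (hr h j), ?_⟩
    simp only [sum_apply, vecMulVec_apply, s, Finset.sum_mul]
    rw [Finset.sum_comm]
    exact Finset.single_le_sum (fun h _ => Finset.sum_nonneg fun i _ =>
      mul_nonneg (hc h i) (hr h j)) (Finset.mem_univ h)
  · ext i j
    simp only [sum_apply, vecMulVec_apply]
    refine Finset.sum_congr rfl fun h _ => ?_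
    rcases (hs h).eq_or_lt with h0 | hpos
    · have : c h i = 0 := le_antisymm (by simpa [← h0] using hcs h i) (hc h i)
      simp [this, ← h0]
    · field_simp

theorem isClosed_setOf_hasNonnegFactorization [Fintype α] [Fintype β] (k : ℕ) :
    IsClosed {P : Matrix α β ℝ | HasNonnegFactorization k P} := by
  refine isClosed_of_closure_subset fun P hP => ?_
  set B : β → ℝ := fun j => ∑ i, P i j + 1
  set U : Set (Matrix α β ℝ) := ⋂ j, {Q | ∑ i, Q i j < B j}
  have hU : IsOpen U := isOpen_iInter_of_finite fun j =>
    isOpen_lt (continuous_finsetSum _ fun i _ => by fun_prop) continuous_const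
  have hPU : P ∈ U := Set.mem_iInter.2 fun j => lt_add_one (∑ i, P i j)
  set F : (Fin k → α → ℝ) × (Fin k → β → ℝ) → Matrix α β ℝ :=
    fun x => ∑ h, vecMulVec (x.1 h) (x.2 h)
  set K : Set ((Fin k → α → ℝ) × (Fin k → β → ℝ)) := Set.Icc 0 (1, fun _ => B)
  have hFK : IsClosed (F '' K) := (isCompact_Icc.image (continuous_finsetSum _ fun h _ =>
    Continuous.matrix_vecMulVec (by fun_prop) (by fun_prop))).isClosed
  have hsub : U ∩ {Q | HasNonnegFactorization k Q} ⊆ F '' K := by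
    rintro Q ⟨hQU, hQ⟩
    obtain ⟨c, r, hc, hr, rfl⟩ := hQ.exists_bounded
    refine ⟨(c, r), ⟨⟨fun h i => (hc h i).1, fun h j => (hr h j).1⟩,
      ⟨fun h i => (hc h i).2, fun h j => ?_⟩⟩, rfl⟩
    exact (hr h j).2.trans (Set.mem_iInter.1 hQU j).le
  obtain ⟨x, ⟨hx0, -⟩, rfl⟩ :=
    hFK.closure_subset (closure_mono hsub (hU.inter_closure ⟨hPU, hP⟩))
  exact ⟨x.1, x.2, fun h i => hx0.1 h i, fun h j => hx0.2 h j, rfl⟩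

def IsFooling (S : Matrix ι ι ℝ) : Prop :=
  (∀ t, S t t ≠ 0) ∧ ∀ t t', t ≠ t' → S t t' = 0 ∨ S t' t = 0

theorem IsFooling.smul {S : Matrix ι ι ℝ} (hS : S.IsFooling) {a : ℝ} (ha : a ≠ 0) :
    (a • S).IsFooling :=
  ⟨fun t => by simpa [ha] using hS.1 t, fun t t' htt' => by simpa [ha] using hS.2 t t' htt'⟩

/-- Each diagonal entry of a fooling matrix needs a dyad of its own: a dyad that is nonzero at
`(t, t)` and at `(t', t')` is also nonzero at `(t, t')` and `(t', t)`. -/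
theorem IsFooling.card_le [Fintype ι] {S : Matrix ι ι ℝ} (hS : S.IsFooling) {k : ℕ}
    (hk : HasNonnegFactorization k S) : Fintype.card ι ≤ k := by
  obtain ⟨c, r, hc, hr, rfl⟩ := hk
  have entry : ∀ t t', (∑ h, vecMulVec (c h) (r h)) t t' = ∑ h, c h t * r h t' := by
    simp [sum_apply, vecMulVec_apply]
  have hdyad : ∀ t, ∃ h, c h t ≠ 0 ∧ r h t ≠ 0 := fun t => by
    obtain ⟨h, -, hh⟩ := Finset.exists_ne_zero_of_sum_ne_zero ((entry t t).symm ▸ hS.1 t)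
    exact ⟨h, left_ne_zero_of_mul hh, right_ne_zero_of_mul hh⟩
  choose d hd using hdyad
  have hpos : ∀ t t', d t = d t' → (∑ h, vecMulVec (c h) (r h)) t t' ≠ 0 := by
    intro t t' hdt
    rw [entry]
    refine (Finset.sum_pos' (fun h _ => mul_nonneg (hc h t) (hr h t')) ⟨d t, Finset.mem_univ _,
      mul_pos ((hc _ t).lt_of_ne' (hd t).1) ((hr _ t').lt_of_ne' ?_)⟩).ne'
    exact hdt ▸ (hd t').2
  have hinj : Function.Injective d := fun t t' hdt => by
    by_contra hne
    rcases hS.2 t t' hne with h0 | h0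
    · exact hpos t t' hdt h0
    · exact hpos t' t hdt.symm h0
  simpa using Fintype.card_le_of_injective d hinj

end Matrix

section nnRank

variable {n m : ℕ} {P : Matrix (Fin n) (Fin m) ℝ}

theorem nnRank_le {k : ℕ} (hP : P.HasNonnegFactorization k) : nnRank P ≤ k :=
  Nat.sInf_le hP

theorem hasNonnegFactorization_nnRank (hP : nnRank P ≠ 0) :
    P.HasNonnegFactorization (nnRank P) :=
  Nat.sInf_mem (Nat.nonempty_of_pos_sInf (Nat.pos_of_ne_zero hP))

theorem card_le_nnRank_of_isFooling {ι : Type*} [Fintype ι] (hP : ∀ i j, 0 ≤ P i j)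
    (e : ι → Fin n) (f : ι → Fin m) (hS : (P.submatrix e f).IsFooling) :
    Fintype.card ι ≤ nnRank P :=
  le_csInf ⟨n, hasNonnegFactorization_of_nonneg hP⟩ fun _ hk =>
    hS.card_le (HasNonnegFactorization.submatrix hk e f)

end nnRank

namespace Matrix

section rank

variable {α β ι K : Type*} [Fintype β] [Field K] [Fintype ι]

theorem rank_le_card_of_row_mem_span [Fintype α] {A : Matrix α β K} (e : ι → α)
    (hA : ∀ i, A i ∈ Submodule.span K (Set.range fun t => A (e t))) :
    A.rank ≤ Fintype.card ι := by
  rw [rank_eq_finrank_span_row]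
  calc Module.finrank K (Submodule.span K (Set.range A.row))
      ≤ Module.finrank K (Submodule.span K (Set.range fun t => A (e t))) :=
        Submodule.finrank_mono (Submodule.span_le.2 (Set.range_subset_iff.2 hA))
    _ ≤ Fintype.card ι := finrank_range_le_card _

theorem card_le_rank_of_isLowerTriangular [LinearOrder ι] [DecidableEq ι] {A : Matrix α β K}
    (e : ι → α) (f : ι → β) (hA : (A.submatrix e f).IsLowerTriangular)
    (hd : ∀ t, A (e t) (f t) ≠ 0) : Fintype.card ι ≤ A.rank := by
  have hdet : IsUnit (A.submatrix e f).det := by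
    rw [det_of_isLowerTriangular _ hA, isUnit_iff_ne_zero]
    exact Finset.prod_ne_zero_iff.2 fun t _ => hd t
  rw [← rank_of_isUnit _ ((isUnit_iff_isUnit_det _).2 hdet)]
  exact rank_submatrix_le A e f

end rank

section normalize

variable {α β : Type*} [Fintype α] [Fintype β]

noncomputable def normalize (A : Matrix α β ℝ) : Matrix α β ℝ := (∑ i, ∑ j, A i j)⁻¹ • A

theorem normalize_nonneg {A : Matrix α β ℝ} (hA : ∀ i j, 0 ≤ A i j) (i : α) (j : β) :
    0 ≤ A.normalize i j :=
  mul_nonneg (inv_nonneg.2 (Finset.sum_nonneg fun i _ => Finset.sum_nonneg fun j _ => hA i j))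
    (hA i j)

theorem sum_normalize {A : Matrix α β ℝ} (hA : ∑ i, ∑ j, A i j ≠ 0) :
    ∑ i, ∑ j, A.normalize i j = 1 := by
  simp only [normalize, smul_apply, smul_eq_mul, ← Finset.mul_sum]
  exact inv_mul_cancel₀ hA

theorem rank_normalize {A : Matrix α β ℝ} (hA : ∑ i, ∑ j, A i j ≠ 0) :
    A.normalize.rank = A.rank :=
  rank_smul_of_mem_nonZeroDivisors A (mem_nonZeroDivisors_of_ne_zero (inv_ne_zero hA))

end normalize

end Matrix

/-- On `{0, 1, 2, 3}` this is the support of `1 + C₄`, with `C₄` the cyclic shift: the classical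
`4 × 4` matrix of rank `3` and nonnegative rank `4`. It continues as the identity on `{4, …, k}`. -/
def cycleSupport (k a b : ℕ) : Prop :=
  (a = b ∧ a ≤ k) ∨ (a = b + 1 ∧ a ≤ 3) ∨ (a = 0 ∧ b = 3)

instance (k a b : ℕ) : Decidable (cycleSupport k a b) := by
  unfold cycleSupport
  infer_instance

def cyclePattern (n m k : ℕ) : Matrix (Fin n) (Fin m) ℝ :=
  of fun i j => if cycleSupport k i j then 1 else 0

section cyclePattern

variable {n m k : ℕ}

theorem cyclePattern_apply (i : Fin n) (j : Fin m) :
    cyclePattern n m k i j = if cycleSupport k i j then 1 else 0 :=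
  rfl

theorem cyclePattern_eq_one {i : Fin n} {j : Fin m} (h : cycleSupport k i j) :
    cyclePattern n m k i j = 1 :=
  if_pos h

theorem cyclePattern_eq_zero {i : Fin n} {j : Fin m} (h : ¬cycleSupport k i j) :
    cyclePattern n m k i j = 0 :=
  if_neg h

theorem cyclePattern_nonneg (i : Fin n) (j : Fin m) : 0 ≤ cyclePattern n m k i j := by
  rw [cyclePattern_apply]
  split_ifs <;> norm_num

theorem sum_cyclePattern_ne_zero (hn : 0 < n) (hm : 0 < m) :
    ∑ i, ∑ j, cyclePattern n m k i j ≠ 0 := by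
  have h00 : 0 < cyclePattern n m k ⟨0, hn⟩ ⟨0, hm⟩ := by
    rw [cyclePattern_eq_one (by simp [cycleSupport])]
    exact one_pos
  refine (Finset.sum_pos' (fun i _ => Finset.sum_nonneg fun j _ => cyclePattern_nonneg i j)
    ⟨⟨0, hn⟩, Finset.mem_univ _, Finset.sum_pos' (fun j _ => cyclePattern_nonneg _ j)
      ⟨⟨0, hm⟩, Finset.mem_univ _, h00⟩⟩).ne'

theorem isFooling_cyclePattern (hn : k < n) (hm : k < m) :
    ((cyclePattern n m k).submatrix (Fin.castLE hn) (Fin.castLE hm)).IsFooling := by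
  refine ⟨fun t => ?_, fun t t' htt' => ?_⟩
  · have := t.isLt
    rw [submatrix_apply, cyclePattern_eq_one (by simp [cycleSupport]; omega)]
    exact one_ne_zero
  · have := Fin.val_ne_of_ne htt'
    have : ¬cycleSupport k t t' ∨ ¬cycleSupport k t' t := by
      unfold cycleSupport
      omega
    rcases this with h | h
    · exact Or.inl (cyclePattern_eq_zero h)
    · exact Or.inr (cyclePattern_eq_zero h)

theorem rank_cyclePattern (hk : 3 ≤ k) (hn : k < n) (hm : k < m) :
    (cyclePattern n m k).rank = k := by
  set e : Fin k → Fin n := fun t => Fin.castLE hn t.succ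
  refine le_antisymm ?_ ?_
  · refine (rank_le_card_of_row_mem_span e fun i => ?_).trans_eq (Fintype.card_fin k)
    have hrow : ∀ t, cyclePattern n m k (e t) ∈
        Submodule.span ℝ (Set.range fun t => cyclePattern n m k (e t)) :=
      fun t => Submodule.subset_span ⟨t, rfl⟩
    rcases lt_or_ge k i with hik | hik
    · convert Submodule.zero_mem _
      ext j
      exact cyclePattern_eq_zero (by unfold cycleSupport; omega)
    rcases Nat.eq_zero_or_pos i with hi0 | hipos
    · have : cyclePattern n m k i = cyclePattern n m k (e ⟨0, by omega⟩)
          - cyclePattern n m k (e ⟨1, by omega⟩) + cyclePattern n m k (e ⟨2, by omega⟩) := by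
        ext j
        simp only [cyclePattern_apply, Pi.add_apply, Pi.sub_apply]
        split_ifs <;>
          simp only [cycleSupport, e, Fin.val_castLE, Fin.val_succ, hi0, true_and] at * <;>
          first | omega | norm_num
      rw [this]
      exact add_mem (sub_mem (hrow _) (hrow _)) (hrow _)
    · have : i = e ⟨i - 1, by omega⟩ := Fin.ext (by simp [e]; omega)
      rw [this]
      exact hrow _
  · refine (Fintype.card_fin k).symm.trans_le
      (card_le_rank_of_isLowerTriangular e (fun t => Fin.castLE hm t.succ) ?_ fun t => ?_)
    · intro t t' htt'
      have : t.val < t'.val := htt'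
      exact cyclePattern_eq_zero (by simp [cycleSupport, e]; omega)
    · rw [cyclePattern_eq_one (by simp [cycleSupport, e])]
      exact one_ne_zero

end cyclePattern

theorem mixture_not_dense (n m k : ℕ) (hk2 : 2 < k) (hk : k < min n m) :
    ∃ P : Matrix (Fin n) (Fin m) ℝ,
      (∀ i j, 0 ≤ P i j) ∧ (∑ i, ∑ j, P i j) = 1 ∧
      P.rank = k ∧ k < nnRank P ∧
      ¬ ∃ Q : ℕ → Matrix (Fin n) (Fin m) ℝ,
        (∀ r, (Q r).rank = k ∧ nnRank (Q r) = k) ∧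
        (∀ i j, Tendsto (fun r => Q r i j) atTop (𝓝 (P i j))) := by
  have hn : k < n := lt_of_lt_of_le hk (min_le_left _ _)
  have hm : k < m := lt_of_lt_of_le hk (min_le_right _ _)
  set A := cyclePattern n m k
  have hA : ∑ i, ∑ j, A i j ≠ 0 := sum_cyclePattern_ne_zero (by omega) (by omega)
  have hP : k < nnRank A.normalize := by
    simpa using card_le_nnRank_of_isFooling (normalize_nonneg cyclePattern_nonneg)
      (Fin.castLE hn) (Fin.castLE hm) ((isFooling_cyclePattern hn hm).smul (inv_ne_zero hA))
  refine ⟨A.normalize, normalize_nonneg cyclePattern_nonneg, sum_normalize hA,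
    (rank_normalize hA).trans (rank_cyclePattern hk2 hn hm), hP, ?_⟩
  rintro ⟨Q, hQ, hlim⟩
  have hlim' : Tendsto Q atTop (𝓝 A.normalize) :=
    tendsto_pi_nhds.2 fun i => tendsto_pi_nhds.2 (hlim i)
  have hQk : ∀ r, (Q r).HasNonnegFactorization k := fun r => by
    obtain ⟨-, hr⟩ := hQ r
    simpa [hr] using hasNonnegFactorization_nnRank (P := Q r) (by omega)
  exact hP.not_ge (nnRank_le ((isClosed_setOf_hasNonnegFactorization k).mem_of_tendsto hlim'
    (Eventually.of_forall hQk)))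
end
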